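/- Let m, k be integers with m ≥ 5 and 2 ≤ k ≤ ⌊(m-1)/2⌋, and let ḡ_{(m,k)} be the associated function on 𝔽_3^m. Then every nonzero codeword of the code C_{ḡ_{(m,k)}} has Hamming weight at least 3^m - 3^{m-1} - 2^k·C(m-1, k), and this weight is attained by the codewords c_{u,v} with u ≠ 0 and wt(v) = 1; that is, the minimum distance of C_{ḡ_{(m,k)}} equals 3^m - 3^{m-1} - 2^k·C(m-1, k). -/

import Mathlib

/-!
The weight of `c_{u,v}` is `3^m` minus the number `Z` of `x` with `u·ḡ(x) + v·x = 0`. Splitting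
by `wt(x) ≤ k` gives `Z = #{v·x = -u} + D`, where `D` is the number of points of the Hamming ball
of radius `k` on the hyperplane `v·x = 0` minus the number on `v·x = -u`. Expanding along a
coordinate `j` with `v_j ≠ 0` gives `D_v(k+1) = D_w(k+1) - D_w(k)` for `v` with its `j`-th
coordinate removed, so by induction `|D| ≤ 2^k·C(m-1,k)`, with equality when `wt(v) = 1`. For
`v = 0`, `Z` is the size of the ball of radius `k`, which is `2^k·C(m-1,k)` plus three times the
size of a ball of radius `k - 1` in `𝔽_3^{m-1}`; the translates of the latter by the three
constant vectors are disjoint because `2(k-1) < m - 1`.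
-/

open Finset

/-- The function `ḡ_{(m,k)} : 𝔽_3^m → 𝔽_3`: `1` if `wt(x) > k`, `0` if `wt(x) ≤ k`. -/
def gbar {m : ℕ} (k : ℕ) (x : Fin m → ZMod 3) : ZMod 3 :=
  if k < hammingNorm x then 1 else 0

/-- The Hamming weight of the codeword `c_{u,v}` of the code `C_h`, i.e. the number
of `x ∈ 𝔽_3^m \ {0}` with `u·h(x) + v·x ≠ 0`. -/
def cwWeight {m : ℕ} (h : (Fin m → ZMod 3) → ZMod 3)
    (u : ZMod 3) (v : Fin m → ZMod 3) : ℕ :=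
  (Finset.univ.filter fun x : Fin m → ZMod 3 =>
    x ≠ 0 ∧ u * h x + ∑ j, v j * x j ≠ 0).card

section Tuples

variable {α : Type*} {n : ℕ}

theorem card_filter_eq_sum_card_filter_insertNth [Fintype α] (j : Fin (n + 1))
    (P : (Fin (n + 1) → α) → Prop) [DecidablePred P] :
    #{x | P x} = ∑ a, #{y : Fin n → α | P (j.insertNth a y)} := by
  simp only [card_filter]
  rw [← (Fin.insertNthEquiv (fun _ => α) j).sum_comp, Fintype.sum_prod_type]
  rfl

theorem hammingNorm_insertNth [Zero α] [DecidableEq α] (j : Fin (n + 1)) (a : α)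
    (y : Fin n → α) :
    hammingNorm (j.insertNth a y : Fin (n + 1) → α) =
      hammingNorm y + if a = 0 then 0 else 1 := by
  simp only [hammingNorm, card_filter, Fin.sum_univ_succAbove _ j, Fin.insertNth_apply_same,
    Fin.insertNth_apply_succAbove, ite_not]
  ring

theorem exists_removeNth_eq_zero_of_hammingNorm_eq_one [Zero α] [DecidableEq α]
    {v : Fin (n + 1) → α} (hv : hammingNorm v = 1) : ∃ j, v j ≠ 0 ∧ j.removeNth v = 0 := by
  have hv0 : v ≠ 0 := hammingNorm_pos_iff.mp (by omega)
  obtain ⟨j, hj : v j ≠ 0⟩ := Function.ne_iff.mp hv0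
  refine ⟨j, hj, hammingNorm_eq_zero.mp ?_⟩
  have := hammingNorm_insertNth j (v j) (j.removeNth v)
  rw [Fin.insertNth_self_removeNth, hv, if_neg hj] at this
  omega

theorem dotProduct_insertNth [CommSemiring α] (v : Fin (n + 1) → α) (j : Fin (n + 1)) (a : α)
    (y : Fin n → α) :
    v ⬝ᵥ (j.insertNth a y : Fin (n + 1) → α) = v j * a + j.removeNth v ⬝ᵥ y := by
  simp only [dotProduct, Fin.sum_univ_succAbove _ j, Fin.insertNth_apply_same,
    Fin.insertNth_apply_succAbove, Fin.removeNth_apply]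

end Tuples

section HammingBalls

variable (α : Type*) [Fintype α] [Zero α] [DecidableEq α]

def hammingBallCard (n k : ℕ) : ℕ := #{x : Fin n → α | hammingNorm x ≤ k}

def hammingSphereCard (n k : ℕ) : ℕ := #{x : Fin n → α | hammingNorm x = k}

variable {α}

theorem card_filter_hammingNorm_succ (n : ℕ) (P : ℕ → Prop) [DecidablePred P] :
    #{x : Fin (n + 1) → α | P (hammingNorm x)} =
      #{y : Fin n → α | P (hammingNorm y)} +
        (Fintype.card α - 1) * #{y : Fin n → α | P (hammingNorm y + 1)} := by
  have h_ne : ∀ a ∈ ({0}ᶜ : Finset α),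
      #{y : Fin n → α | P (hammingNorm (Fin.insertNth 0 a y : Fin (n + 1) → α))} =
        #{y : Fin n → α | P (hammingNorm y + 1)} := fun a ha => by
    rw [mem_compl, mem_singleton] at ha
    simp only [hammingNorm_insertNth, if_neg ha]
  rw [card_filter_eq_sum_card_filter_insertNth 0, Fintype.sum_eq_add_sum_compl 0,
    sum_congr rfl h_ne, sum_const, card_compl, card_singleton, smul_eq_mul]
  simp only [hammingNorm_insertNth, if_pos, add_zero]

theorem hammingSphereCard_zero_right (n : ℕ) : hammingSphereCard α n 0 = 1 := by
  simp [hammingSphereCard, hammingNorm_eq_zero, filter_eq']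

theorem hammingBallCard_zero_right (n : ℕ) : hammingBallCard α n 0 = 1 := by
  simp [hammingBallCard, hammingNorm_eq_zero, filter_eq']

theorem hammingSphereCard_succ_succ (n k : ℕ) :
    hammingSphereCard α (n + 1) (k + 1) =
      hammingSphereCard α n (k + 1) + (Fintype.card α - 1) * hammingSphereCard α n k := by
  simpa [hammingSphereCard] using card_filter_hammingNorm_succ (α := α) n (· = k + 1)

theorem hammingBallCard_succ_succ (n k : ℕ) :
    hammingBallCard α (n + 1) (k + 1) =
      hammingBallCard α n (k + 1) + (Fintype.card α - 1) * hammingBallCard α n k := by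
  simpa [hammingBallCard] using card_filter_hammingNorm_succ (α := α) n (· ≤ k + 1)

theorem hammingBallCard_succ_right (n k : ℕ) :
    hammingBallCard α n (k + 1) = hammingBallCard α n k + hammingSphereCard α n (k + 1) := by
  rw [hammingBallCard, hammingBallCard, hammingSphereCard, ← card_union_of_disjoint
    (disjoint_filter.2 fun _ _ h => by omega), ← filter_or]
  congr 1
  exact filter_congr fun _ _ => by omega

theorem hammingSphereCard_eq (n k : ℕ) :
    hammingSphereCard α n k = (Fintype.card α - 1) ^ k * n.choose k := by
  induction n generalizing k with
  | zero =>
    cases k with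
    | zero => simp [hammingSphereCard_zero_right]
    | succ k => simp [hammingSphereCard, hammingNorm]
  | succ n ih =>
    cases k with
    | zero => simp [hammingSphereCard_zero_right]
    | succ k =>
      rw [hammingSphereCard_succ_succ, ih, ih, Nat.choose_succ_succ]
      ring

end HammingBalls

theorem card_mul_hammingBallCard_le (G : Type*) [AddGroup G] [Fintype G] [DecidableEq G]
    {n k : ℕ} (h : 2 * k < n) :
    Fintype.card G * hammingBallCard G n k ≤ Fintype.card G ^ n := by
  set s : Finset (G × (Fin n → G)) :=
    univ ×ˢ ({x | hammingNorm x ≤ k} : Finset (Fin n → G)) with hs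
  have h_inj : Set.InjOn (fun p : G × (Fin n → G) => p.2 + fun _ => p.1) s := by
    rintro ⟨a, x⟩ hx ⟨b, y⟩ hy h_eq
    simp only [hs, mem_coe, mem_product, mem_filter, mem_univ, true_and] at hx hy
    have h_eq i : x i + a = y i + b := congr_fun h_eq i
    obtain rfl : a = b := by
      by_contra h_ab
      have h_ne i : x i ≠ y i := fun h_xy => h_ab <| by simpa [h_xy] using h_eq i
      have h_dist : hammingDist x y = n := by
        rw [hammingDist, filter_true_of_mem fun i _ => h_ne i, card_univ, Fintype.card_fin]
      have := hammingDist_triangle x 0 y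
      rw [hammingDist_zero_right, hammingDist_zero_left] at this
      omega
    exact Prod.ext rfl (funext fun i => add_right_cancel (h_eq i))
  simpa [hs, card_product, hammingBallCard] using
    card_le_card_of_injOn _ (fun _ _ => mem_univ _) h_inj

theorem hammingBallCard_succ_le {G : Type*} [AddGroup G] [Fintype G] [DecidableEq G]
    {n k : ℕ} (h : 2 * k ≤ n) :
    hammingBallCard G (n + 1) k ≤ Fintype.card G ^ n + hammingSphereCard G n k := by
  cases k with
  | zero => simp [hammingBallCard_zero_right, hammingSphereCard_zero_right]
  | succ k =>
    have h_card := card_mul_hammingBallCard_le G (n := n) (k := k) (by omega)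
    have h_split : (Fintype.card G - 1) * hammingBallCard G n k + hammingBallCard G n k =
        Fintype.card G * hammingBallCard G n k := by
      rw [← Nat.succ_mul, Nat.succ_eq_add_one, Nat.sub_add_cancel Fintype.card_pos]
    rw [hammingBallCard_succ_succ, hammingBallCard_succ_right]
    omega

section HyperplaneSections

variable {F : Type*} [Field F] [Fintype F] [DecidableEq F] {n : ℕ}

def ballHyperplaneCard (v : Fin n → F) (t : F) (k : ℕ) : ℕ :=
  #{x | hammingNorm x ≤ k ∧ v ⬝ᵥ x = t}

def ballHyperplaneBias (v : Fin n → F) (c : F) (k : ℕ) : ℤ :=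
  ballHyperplaneCard v 0 k - ballHyperplaneCard v c k

theorem sum_ballHyperplaneCard (v : Fin n → F) (k : ℕ) :
    ∑ t, ballHyperplaneCard v t k = hammingBallCard F n k := by
  rw [hammingBallCard, card_eq_sum_card_fiberwise (f := (v ⬝ᵥ ·)) (t := univ)
    fun _ _ => mem_univ _]
  simp only [ballHyperplaneCard, filter_filter]

theorem ballHyperplaneCard_zero_right (v : Fin n → F) (t : F) :
    ballHyperplaneCard v t 0 = if t = 0 then 1 else 0 := by
  simp only [ballHyperplaneCard, Nat.le_zero, hammingNorm_eq_zero]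
  split_ifs with ht <;> simp [filter_and, filter_eq', ht, eq_comm]

theorem ballHyperplaneCard_zero_left (t : F) (k : ℕ) :
    ballHyperplaneCard (0 : Fin n → F) t k = if t = 0 then hammingBallCard F n k else 0 := by
  split_ifs with ht <;> simp [ballHyperplaneCard, hammingBallCard, ht, eq_comm]

theorem ballHyperplaneCard_succ {v : Fin (n + 1) → F} {j : Fin (n + 1)} (hv : v j ≠ 0)
    (t : F) (k : ℕ) :
    (ballHyperplaneCard v t (k + 1) : ℤ) = ballHyperplaneCard (j.removeNth v) t (k + 1) +
      hammingBallCard F n k - ballHyperplaneCard (j.removeNth v) t k := by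
  set w := j.removeNth v
  -- split by the `j`-th coordinate `a`: for `a ≠ 0` the level seen by `w` is `t - v j * a`,
  -- which runs over all levels except `t`
  have h_zero : #{y : Fin n → F | hammingNorm (j.insertNth 0 y : Fin (n + 1) → F) ≤ k + 1 ∧
      v ⬝ᵥ (j.insertNth 0 y : Fin (n + 1) → F) = t} = ballHyperplaneCard w t (k + 1) := by
    simp only [ballHyperplaneCard, hammingNorm_insertNth, dotProduct_insertNth, if_pos, add_zero,
      mul_zero, zero_add, w]
  have h_ne : ∀ a ∈ ({0}ᶜ : Finset F),
      #{y : Fin n → F | hammingNorm (j.insertNth a y : Fin (n + 1) → F) ≤ k + 1 ∧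
        v ⬝ᵥ (j.insertNth a y : Fin (n + 1) → F) = t} =
        ballHyperplaneCard w (t - v j * a) k :=
    fun a ha => by
      rw [mem_compl, mem_singleton] at ha
      simp only [ballHyperplaneCard, hammingNorm_insertNth, dotProduct_insertNth, if_neg ha,
        Nat.add_le_add_iff_right, eq_sub_iff_add_eq', w]
  have h_sum : ∑ a, ballHyperplaneCard w (t - v j * a) k = hammingBallCard F n k := by
    rw [← sum_ballHyperplaneCard w k]
    exact ((Equiv.mulLeft₀ (v j) hv).trans (Equiv.subLeft t)).sum_comp
      (ballHyperplaneCard w · k)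
  rw [Fintype.sum_eq_add_sum_compl 0, mul_zero, sub_zero] at h_sum
  rw [ballHyperplaneCard, card_filter_eq_sum_card_filter_insertNth j,
    Fintype.sum_eq_add_sum_compl 0, h_zero, sum_congr rfl h_ne, ← h_sum]
  push_cast
  ring

theorem ballHyperplaneBias_succ {v : Fin (n + 1) → F} {j : Fin (n + 1)} (hv : v j ≠ 0) (c : F)
    (k : ℕ) :
    ballHyperplaneBias v c (k + 1) =
      ballHyperplaneBias (j.removeNth v) c (k + 1) - ballHyperplaneBias (j.removeNth v) c k := by
  simp only [ballHyperplaneBias, ballHyperplaneCard_succ hv]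
  ring

theorem ballHyperplaneBias_zero_right (v : Fin n → F) {c : F} (hc : c ≠ 0) :
    ballHyperplaneBias v c 0 = 1 := by
  simp [ballHyperplaneBias, ballHyperplaneCard_zero_right, hc]

theorem ballHyperplaneBias_zero_left {c : F} (hc : c ≠ 0) (k : ℕ) :
    ballHyperplaneBias (0 : Fin n → F) c k = hammingBallCard F n k := by
  simp [ballHyperplaneBias, ballHyperplaneCard_zero_left, hc]

theorem ballHyperplaneBias_of_removeNth_eq_zero {v : Fin (n + 1) → F} {j : Fin (n + 1)}
    (hv : v j ≠ 0) (hw : j.removeNth v = 0) {c : F} (hc : c ≠ 0) (k : ℕ) :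
    ballHyperplaneBias v c k = hammingSphereCard F n k := by
  cases k with
  | zero => simp [ballHyperplaneBias_zero_right v hc, hammingSphereCard_zero_right]
  | succ k =>
    rw [ballHyperplaneBias_succ hv, hw, ballHyperplaneBias_zero_left hc,
      ballHyperplaneBias_zero_left hc, hammingBallCard_succ_right]
    push_cast
    ring

theorem abs_ballHyperplaneBias_le {v : Fin (n + 1) → F} (hv : v ≠ 0) {c : F} (hc : c ≠ 0)
    (k : ℕ) : |ballHyperplaneBias v c k| ≤ hammingSphereCard F n k := by
  induction n generalizing k with
  | zero =>
    obtain ⟨j, hj : v j ≠ 0⟩ := Function.ne_iff.mp hv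
    rw [ballHyperplaneBias_of_removeNth_eq_zero hj (Subsingleton.elim _ _) hc,
      abs_of_nonneg (by positivity)]
  | succ n ih =>
    obtain ⟨j, hj : v j ≠ 0⟩ := Function.ne_iff.mp hv
    by_cases hw : j.removeNth v = 0
    · rw [ballHyperplaneBias_of_removeNth_eq_zero hj hw hc, abs_of_nonneg (by positivity)]
    cases k with
    | zero => simp [ballHyperplaneBias_zero_right v hc, hammingSphereCard_zero_right]
    | succ k =>
      have hq : 1 ≤ Fintype.card F - 1 := Nat.le_sub_one_of_lt Fintype.one_lt_card
      rw [ballHyperplaneBias_succ hj, hammingSphereCard_succ_succ]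
      calc _ ≤ |ballHyperplaneBias (j.removeNth v) c (k + 1)| +
            |ballHyperplaneBias (j.removeNth v) c k| := abs_sub _ _
        _ ≤ hammingSphereCard F n (k + 1) + hammingSphereCard F n k :=
          add_le_add (ih hw (k + 1)) (ih hw k)
        _ ≤ _ := by
          push_cast
          gcongr
          exact le_mul_of_one_le_left (by positivity) (mod_cast hq)

theorem ballHyperplaneBias_of_hammingNorm_eq_one {v : Fin (n + 1) → F} (hv : hammingNorm v = 1)
    {c : F} (hc : c ≠ 0) (k : ℕ) : ballHyperplaneBias v c k = hammingSphereCard F n k :=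
  let ⟨_, hj, hw⟩ := exists_removeNth_eq_zero_of_hammingNorm_eq_one hv
  ballHyperplaneBias_of_removeNth_eq_zero hj hw hc k

theorem card_dotProduct_eq {v : Fin (n + 1) → F} (hv : v ≠ 0) (t : F) :
    #{x | v ⬝ᵥ x = t} = Fintype.card F ^ n := by
  obtain ⟨j, hj : v j ≠ 0⟩ := Function.ne_iff.mp hv
  have h_fiber a : #{y : Fin n → F | v ⬝ᵥ (j.insertNth a y : Fin (n + 1) → F) = t} =
      #{y | j.removeNth v ⬝ᵥ y = t - v j * a} := by
    simp only [dotProduct_insertNth, eq_sub_iff_add_eq']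
  have h_sum : ∑ a, #{y | j.removeNth v ⬝ᵥ y = t - v j * a} =
      ∑ s, #{y | j.removeNth v ⬝ᵥ y = s} :=
    ((Equiv.mulLeft₀ (v j) hj).trans (Equiv.subLeft t)).sum_comp
      (fun s => #{y | j.removeNth v ⬝ᵥ y = s})
  rw [card_filter_eq_sum_card_filter_insertNth j, Fintype.sum_congr _ _ h_fiber, h_sum,
    ← card_eq_sum_card_fiberwise fun _ _ => mem_univ _, card_univ, Fintype.card_fun,
    Fintype.card_fin]

end HyperplaneSections

theorem cwWeight_add_card_eq_zero {m : ℕ} {h : (Fin m → ZMod 3) → ZMod 3} (h0 : h 0 = 0)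
    (u : ZMod 3) (v : Fin m → ZMod 3) :
    cwWeight h u v + #{x | u * h x + v ⬝ᵥ x = 0} = 3 ^ m := by
  have h_weight : cwWeight h u v = #{x | ¬u * h x + v ⬝ᵥ x = 0} := by
    refine congrArg card (filter_congr fun x _ => ⟨And.right, fun hx => ⟨?_, hx⟩⟩)
    rintro rfl
    simp [h0] at hx
  rw [h_weight, add_comm, card_filter_add_card_filter_not, card_univ, Fintype.card_fun,
    ZMod.card, Fintype.card_fin]

theorem card_gbar_eq_zero {m : ℕ} (k : ℕ) (u : ZMod 3) (v : Fin m → ZMod 3) :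
    (#{x | u * gbar k x + v ⬝ᵥ x = 0} : ℤ) =
      #{x | v ⬝ᵥ x = -u} + ballHyperplaneBias v (-u) k := by
  have h_split (P : (Fin m → ZMod 3) → Prop) [DecidablePred P] :
      #{x | P x} = #{x | hammingNorm x ≤ k ∧ P x} + #{x | ¬hammingNorm x ≤ k ∧ P x} := by
    rw [← card_filter_add_card_filter_not (fun x => hammingNorm x ≤ k), filter_filter,
      filter_filter]
    simp only [and_comm]
  have h_low : #{x | hammingNorm x ≤ k ∧ u * gbar k x + v ⬝ᵥ x = 0} =
      ballHyperplaneCard v 0 k :=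
    congrArg card <| filter_congr fun x _ => and_congr_right fun hx => by simp [gbar, not_lt.2 hx]
  have h_high : #{x | ¬hammingNorm x ≤ k ∧ u * gbar k x + v ⬝ᵥ x = 0} =
      #{x | ¬hammingNorm x ≤ k ∧ v ⬝ᵥ x = -u} :=
    congrArg card <| filter_congr fun x _ => and_congr_right fun hx => by
      simp [gbar, not_le.1 hx, eq_neg_iff_add_eq_zero, add_comm]
  rw [h_split, h_split (v ⬝ᵥ · = -u), h_low, h_high, ballHyperplaneBias, ballHyperplaneCard,
    ballHyperplaneCard]
  push_cast
  ring

theorem cwWeight_gbar {m : ℕ} (k : ℕ) (u : ZMod 3) (v : Fin m → ZMod 3) :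
    (cwWeight (gbar (m := m) k) u v : ℤ) =
      3 ^ m - #{x | v ⬝ᵥ x = -u} - ballHyperplaneBias v (-u) k := by
  have h := cwWeight_add_card_eq_zero (h := gbar k) (by simp [gbar]) u v
  have h_zero := card_gbar_eq_zero k u v
  zify at h
  linarith

theorem stmt_16 (m k : ℕ) (hm : 5 ≤ m) (hk : k ≤ (m - 1) / 2) :
    (∀ (u : ZMod 3) (v : Fin m → ZMod 3),
      (∃ x : Fin m → ZMod 3, x ≠ 0 ∧ u * gbar k x + ∑ j, v j * x j ≠ 0) →
      (3 : ℤ) ^ m - 3 ^ (m - 1) - 2 ^ k * ((m - 1).choose k : ℤ)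
        ≤ (cwWeight (gbar (m := m) k) u v : ℤ))
    ∧ (∀ (u : ZMod 3) (v : Fin m → ZMod 3), u ≠ 0 → hammingNorm v = 1 →
      (cwWeight (gbar (m := m) k) u v : ℤ)
        = (3 : ℤ) ^ m - 3 ^ (m - 1) - 2 ^ k * ((m - 1).choose k : ℤ)) := by
  obtain ⟨n, rfl⟩ : ∃ n, m = n + 1 := ⟨m - 1, by omega⟩
  have h_sphere : (hammingSphereCard (ZMod 3) n k : ℤ) = 2 ^ k * (n.choose k : ℤ) := by
    simp [hammingSphereCard_eq]
  simp only [Nat.add_sub_cancel, ← h_sphere]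
  refine ⟨fun u v ⟨x, _, hx⟩ => ?_, fun u v hu hv => ?_⟩
  · rw [cwWeight_gbar]
    rcases eq_or_ne v 0 with rfl | hv
    · have hu : -u ≠ 0 := neg_ne_zero.2 fun hu => by simp [hu] at hx
      have h_ball := hammingBallCard_succ_le (G := ZMod 3) (n := n) (k := k) (by omega)
      simp only [ZMod.card] at h_ball
      rw [ballHyperplaneBias_zero_left hu]
      simp only [zero_dotProduct, hu.symm, filter_false, card_empty, CharP.cast_eq_zero, sub_zero]
      linarith
    · rw [card_dotProduct_eq hv, ZMod.card]
      rcases eq_or_ne u 0 with rfl | hu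
      · simp [ballHyperplaneBias]
      · have := abs_le.mp (abs_ballHyperplaneBias_le hv (neg_ne_zero.2 hu) k)
        push_cast
        linarith
  · have hv0 : v ≠ 0 := by rintro rfl; simp at hv
    rw [cwWeight_gbar, card_dotProduct_eq hv0, ZMod.card,
      ballHyperplaneBias_of_hammingNorm_eq_one hv (neg_ne_zero.2 hu)]
    push_cast
    ring
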